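/- In the randomized pool with heterogeneous degrees, suppose G(λ) < ∞. Then ψ = ∏_{ℓ=1}^{K} (1 − ρ_{|ℓ}), where ρ_{|ℓ} = ρ ∑_{u=1}^{N} p_u C(ℓ−1, d_u−1)/C(K−1, d_u−1) with the convention C(a,b) = 0 when a < b. If moreover ∑_{x∈ℕ^I} (∑_S x_S) Φ(x) λ^x < ∞, then the total mean number of jobs is L = ∑_{ℓ=1}^{K} ρ_{|ℓ} / (1 − ρ_{|ℓ}). -/

import Mathlib

open scoped BigOperators

/-- The balance function of balanced fairness: `Φ(0) = 1` and
`Φ(x) = (∑_{i : x_i > 0} Φ(x - e_i)) / M(⋃_{i : x_i > 0} 𝒦_i)`. -/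
noncomputable def Phi {I K : Type} [Fintype I] [DecidableEq I] [DecidableEq K]
    (μ : K → ℝ) (Ka : I → Finset K) (x : I → ℕ) : ℝ :=
  if x = fun _ => 0 then 1
  else (∑ i ∈ (Finset.univ.filter (fun i => 0 < x i)).attach,
      Phi μ Ka (Function.update x i.1 (x i.1 - 1))) /
    (∑ k ∈ (Finset.univ.filter (fun i => 0 < x i)).biUnion Ka, μ k)
termination_by ∑ i, x i
decreasing_by
  have hi := i.2
  simp only [Finset.mem_filter] at hi
  apply Finset.sum_lt_sum
  · intro j _
    rcases eq_or_ne j i.1 with rfl | h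
    · simp [Function.update_self]
    · rw [Function.update_of_ne h]
  · exact ⟨i.1, Finset.mem_univ i.1, by simp [Function.update_self]; omega⟩

/-- The normalization series `G(λ) = ∑_{x∈ℕ^I} Φ(x) λ^x` (as a real tsum). -/
noncomputable def Gf {I K : Type} [Fintype I] [DecidableEq I] [DecidableEq K]
    (μ : K → ℝ) (Ka : I → Finset K) (lam : I → ℝ) : ℝ :=
  ∑' x : I → ℕ, Phi μ Ka x * ∏ i, lam i ^ x i

/-- Classes of the randomized pool with heterogeneous degrees: a type `u` together with a
`d_u`-element subset of the `K` servers. -/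
abbrev HetCls (K N : ℕ) (d : Fin N → ℕ) : Type :=
  Σ u : Fin N, {S : Finset (Fin K) // S.card = d u}

/-- Arrival rate `Kλp_u/C(K,d_u)` of a class of type `u`. -/
noncomputable def hetRate (K N : ℕ) (d : Fin N → ℕ) (p : Fin N → ℝ) (lam : ℝ)
    (c : HetCls K N d) : ℝ :=
  (K : ℝ) * lam * p c.1 / (K.choose (d c.1) : ℝ)

/-- The load `ρ_{|ℓ} = ρ ∑_u p_u C(ℓ−1,d_u−1)/C(K−1,d_u−1)` of the system restricted to
`ℓ` servers (with the convention `C(a,b) = 0` for `a < b`). -/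
noncomputable def hetLoad (K N : ℕ) (d : Fin N → ℕ) (p : Fin N → ℝ) (lam μ : ℝ)
    (ℓ : ℕ) : ℝ :=
  lam / μ * ∑ u, p u * ((ℓ - 1).choose (d u - 1) : ℝ) / ((K - 1).choose (d u - 1) : ℝ)


/-!
Let `G_A(F) = ∑_{x : servers(x) ⊆ A} F(|x|) Φ(x) λ^x` be the normalization series restricted to
the states that only use the servers in `A`. Summing the balance equations
`μ(servers(x)) Φ(x) = ∑_{i : x_i > 0} Φ(x - e_i)` over these states and substituting
`x = y + e_i` gives `∑_{k ∈ A} μ (G_A(F) - G_{A ∖ k}(F)) = λ_A G_A(F(· + 1))`, where `λ_A` is the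
arrival rate of the classes whose servers lie in `A`. In the randomized pool, `G_A` depends only on
`ℓ = |A|` by symmetry and `λ_A = μ ℓ ρ_{|ℓ}`, so with `g_ℓ = G_A(1)` and `h_ℓ = G_A(|·|)` the
identity reads `(1 - ρ_{|ℓ}) g_ℓ = g_{ℓ-1}` and `(1 - ρ_{|ℓ}) h_ℓ = h_{ℓ-1} + ρ_{|ℓ} g_ℓ`, with
`g_0 = 1`, `h_0 = 0`. Hence `G = g_K = ∏ (1 - ρ_{|ℓ})⁻¹` and
`L = h_K / g_K = ∑ ρ_{|ℓ} / (1 - ρ_{|ℓ})`.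
-/

open Finset Function

section Summation

variable {α κ : Type*}

theorem Summable.ite_zero {h : α → ℝ} (hh : Summable h) (p : α → Prop) [DecidablePred p] :
    Summable fun a => if p a then h a else 0 :=
  (hh.indicator {a | p a}).congr fun a => by simp [Set.indicator_apply]

-- For `s a ⊆ A`, `∑_{k ∈ s a} μ k = ∑_{k ∈ A} μ k (1[s a ⊆ A] - 1[s a ⊆ A.erase k])`.
theorem tsum_ite_subset_sum_mul [DecidableEq κ] {s : α → Finset κ} {h : α → ℝ}
    (hh : Summable h) (μ : κ → ℝ) (A : Finset κ) :
    ∑' a, (if s a ⊆ A then (∑ k ∈ s a, μ k) * h a else 0) =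
      ∑ k ∈ A, μ k * ((∑' a, if s a ⊆ A then h a else 0) -
        ∑' a, if s a ⊆ A.erase k then h a else 0) := by
  have hres : ∀ B : Finset κ, Summable fun a => if s a ⊆ B then h a else 0 := fun B =>
    hh.ite_zero _
  have hpt : ∀ a, (if s a ⊆ A then (∑ k ∈ s a, μ k) * h a else 0) =
      ∑ k ∈ A, μ k * ((if s a ⊆ A then h a else 0) - if s a ⊆ A.erase k then h a else 0) := by
    intro a
    by_cases hA : s a ⊆ A
    · have hterm : ∀ k ∈ A, μ k * (h a - if s a ⊆ A.erase k then h a else 0) =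
          if k ∈ s a then μ k * h a else 0 := fun k _ => by
        by_cases hk : k ∈ s a <;> simp [subset_erase, hA, hk]
      simp only [if_pos hA]
      rw [sum_congr rfl hterm, sum_ite_mem, inter_eq_right.2 hA, sum_mul]
    · have hAk : ∀ k, ¬ s a ⊆ A.erase k := fun k hk => hA (hk.trans (erase_subset k A))
      simp [hA, hAk]
  rw [tsum_congr hpt, Summable.tsum_finsetSum fun k _ => ((hres A).sub (hres _)).mul_left _]
  simp only [tsum_mul_left, (hres A).tsum_sub (hres _)]

end Summation

theorem exists_forall_eq_apply_card {α β : Type*} {f : Finset α → β}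
    (hf : ∀ (σ : Equiv.Perm α) A, f (A.map σ.toEmbedding) = f A) :
    ∃ φ : ℕ → β, ∀ A, f A = φ A.card := by
  classical
  refine ⟨fun n => if h : ∃ B : Finset α, B.card = n then f h.choose else f ∅, fun A => ?_⟩
  have h : ∃ B : Finset α, B.card = A.card := ⟨A, rfl⟩
  obtain ⟨σ, hσ⟩ := Equiv.Perm.exists_map_finset_eq A h.choose h.choose_spec.symm
  dsimp only
  rw [dif_pos h, ← hσ, hf]

section ActiveServers

variable {I Kt : Type} [Fintype I] [DecidableEq Kt] {Ka : I → Finset Kt}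

def activeServers (Ka : I → Finset Kt) (x : I → ℕ) : Finset Kt :=
  (univ.filter fun i => 0 < x i).biUnion Ka

theorem activeServers_nonempty (hKa : ∀ i, (Ka i).Nonempty) {x : I → ℕ} (hx : x ≠ 0) :
    (activeServers Ka x).Nonempty := by
  obtain ⟨i, hi⟩ := Function.ne_iff.1 hx
  exact (hKa i).mono (subset_biUnion_of_mem Ka (by simpa [Nat.pos_iff_ne_zero] using hi))

theorem filter_pos_comp_symm (e : I ≃ I) (x : I → ℕ) :
    univ.filter (fun i => 0 < (x ∘ e.symm) i) =
      (univ.filter fun i => 0 < x i).map e.toEmbedding := by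
  ext j; simp

theorem activeServers_comp_symm (e : I ≃ I) (σ : Equiv.Perm Kt)
    (hKa : ∀ i, Ka (e i) = (Ka i).map σ.toEmbedding) (x : I → ℕ) :
    activeServers Ka (x ∘ e.symm) = (activeServers Ka x).map σ.toEmbedding := by
  ext k
  simp only [activeServers, filter_pos_comp_symm, mem_biUnion, mem_map, exists_exists_and_eq_and,
    Equiv.coe_toEmbedding, hKa]
  tauto

end ActiveServers

section BalanceFunction

variable {I Kt : Type} [Fintype I] [DecidableEq I] [DecidableEq Kt]
  {μ : Kt → ℝ} {Ka : I → Finset Kt}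

theorem sum_update_pred_lt {x : I → ℕ} {i : I} (hi : 0 < x i) :
    ∑ j, update x i (x i - 1) j < ∑ j, x j :=
  sum_lt_sum (fun j _ => by rcases eq_or_ne j i with rfl | hj <;> simp [*])
    ⟨i, mem_univ i, by simp; omega⟩

theorem Phi_zero : Phi μ Ka 0 = 1 := by
  rw [Phi]; exact if_pos rfl

theorem Phi_of_ne_zero {x : I → ℕ} (hx : x ≠ 0) :
    Phi μ Ka x = (∑ i ∈ univ.filter (fun i => 0 < x i), Phi μ Ka (update x i (x i - 1))) /
      ∑ k ∈ activeServers Ka x, μ k := by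
  rw [Phi, if_neg (show ¬x = fun _ => 0 from hx),
    sum_attach _ fun i => Phi μ Ka (update x i (x i - 1))]
  rfl

theorem Phi_balance (hμ : ∀ k, 0 < μ k) (hKa : ∀ i, (Ka i).Nonempty) (x : I → ℕ) :
    (∑ k ∈ activeServers Ka x, μ k) * Phi μ Ka x =
      ∑ i ∈ univ.filter (fun i => 0 < x i), Phi μ Ka (update x i (x i - 1)) := by
  rcases eq_or_ne x 0 with rfl | hx
  · simp [activeServers]
  · rw [Phi_of_ne_zero hx, mul_div_cancel₀]
    exact (sum_pos (fun k _ => hμ k) (activeServers_nonempty hKa hx)).ne'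

theorem Phi_comp_symm (e : I ≃ I) (σ : Equiv.Perm Kt)
    (hKa : ∀ i, Ka (e i) = (Ka i).map σ.toEmbedding) (hμ : ∀ k, μ (σ k) = μ k)
    (x : I → ℕ) : Phi μ Ka (x ∘ e.symm) = Phi μ Ka x := by
  rcases eq_or_ne x 0 with rfl | hx
  · rfl
  have hx' : x ∘ e.symm ≠ 0 := fun h => hx (funext fun i => by simpa using congrFun h (e i))
  rw [Phi_of_ne_zero hx, Phi_of_ne_zero hx', activeServers_comp_symm e σ hKa, sum_map,
    filter_pos_comp_symm, sum_map]
  simp only [Equiv.coe_toEmbedding, hμ]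
  congr 1
  refine sum_congr rfl fun i hi => ?_
  have hupd : update (x ∘ e.symm) (e i) (x i - 1) = update x i (x i - 1) ∘ e.symm := by
    rw [update_comp_equiv, e.symm_symm]
  rw [comp_apply, e.symm_apply_apply, hupd, Phi_comp_symm e σ hKa hμ]
termination_by ∑ i, x i
decreasing_by exact sum_update_pred_lt (mem_filter.1 hi).2

end BalanceFunction

section AddJob

variable {I : Type} [DecidableEq I]

def addJob (x : I → ℕ) (i : I) : I → ℕ := x + Pi.single i 1

theorem addJob_injective (i : I) : Injective fun x : I → ℕ => addJob x i :=
  add_left_injective _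

theorem range_addJob (i : I) : Set.range (fun x : I → ℕ => addJob x i) = {x | 0 < x i} := by
  ext x
  constructor
  · rintro ⟨y, rfl⟩
    simp [addJob]
  · intro hx
    refine ⟨x - Pi.single i 1, funext fun j => ?_⟩
    rcases eq_or_ne j i with rfl | hj
    · simp only [Set.mem_ofPred_eq] at hx
      simp [addJob]; omega
    · simp [addJob, hj]

theorem update_addJob (x : I → ℕ) (i : I) : update (addJob x i) i (addJob x i i - 1) = x := by
  ext j; rcases eq_or_ne j i with rfl | hj <;> simp [addJob, *]

theorem tsum_comp_addJob {G : (I → ℕ) → ℝ} (i : I) (hG : ∀ x, x i = 0 → G x = 0) :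
    ∑' y, G (addJob y i) = ∑' x, G x :=
  (addJob_injective i).tsum_eq fun x hx => by
    rw [range_addJob, Set.mem_ofPred_eq, Nat.pos_iff_ne_zero]
    exact fun h => hx (hG x h)

theorem summable_comp_addJob_iff {G : (I → ℕ) → ℝ} (i : I) (hG : ∀ x, x i = 0 → G x = 0) :
    Summable (fun y => G (addJob y i)) ↔ Summable G :=
  (addJob_injective i).summable_iff fun x hx => hG x <| by
    rwa [range_addJob, Set.mem_ofPred_eq, Nat.pos_iff_ne_zero, not_not] at hx

variable [Fintype I]

theorem sum_addJob (x : I → ℕ) (i : I) : ∑ j, addJob x i j = ∑ j, x j + 1 := by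
  simp [addJob, sum_add_distrib]

theorem prod_pow_addJob {M : Type*} [CommMonoid M] (lam : I → M) (x : I → ℕ) (i : I) :
    ∏ j, lam j ^ addJob x i j = lam i * ∏ j, lam j ^ x j := by
  simp only [addJob, Pi.add_apply, pow_add, prod_mul_distrib, Pi.single_apply, pow_ite, pow_one,
    pow_zero, prod_ite_eq', mem_univ, if_true, mul_comm]

theorem activeServers_addJob {Kt : Type} [DecidableEq Kt] (Ka : I → Finset Kt) (x : I → ℕ)
    (i : I) : activeServers Ka (addJob x i) = Ka i ∪ activeServers Ka x := by
  have hsupp : univ.filter (fun j => 0 < addJob x i j) =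
      insert i (univ.filter fun j => 0 < x j) := by
    ext j; rcases eq_or_ne j i with rfl | hj <;> simp [addJob, *]
  rw [activeServers, hsupp, biUnion_insert, activeServers]

end AddJob

section RestrictedSums

variable {I Kt : Type} [Fintype I] [DecidableEq I] [DecidableEq Kt]
  {μ : Kt → ℝ} {Ka : I → Finset Kt} {lam : I → ℝ}

noncomputable def stateWeight (μ : Kt → ℝ) (Ka : I → Finset Kt) (lam : I → ℝ) (x : I → ℕ) : ℝ :=
  Phi μ Ka x * ∏ i, lam i ^ x i

noncomputable def restrictedSum (μ : Kt → ℝ) (Ka : I → Finset Kt) (lam : I → ℝ) (F : ℕ → ℝ)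
    (A : Finset Kt) : ℝ :=
  ∑' x : I → ℕ, if activeServers Ka x ⊆ A then F (∑ i, x i) * stateWeight μ Ka lam x else 0

-- The balance equations of `Φ` summed over `{x | activeServers Ka x ⊆ A}`, reindexed by
-- `x = addJob y i`.
theorem tsum_ite_subset_load_mul (hμ : ∀ k, 0 < μ k) (hKa : ∀ i, (Ka i).Nonempty)
    (F : ℕ → ℝ) (A : Finset Kt)
    (hF : Summable fun x => F (∑ i, x i + 1) * stateWeight μ Ka lam x) :
    ∑' x, (if activeServers Ka x ⊆ A then
        (∑ k ∈ activeServers Ka x, μ k) * (F (∑ i, x i) * stateWeight μ Ka lam x) else 0) =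
      (∑ i, if Ka i ⊆ A then lam i else 0) * restrictedSum μ Ka lam (fun n => F (n + 1)) A := by
  set T : I → (I → ℕ) → ℝ := fun i x => if 0 < x i ∧ activeServers Ka x ⊆ A then
    F (∑ j, x j) * (Phi μ Ka (update x i (x i - 1)) * ∏ j, lam j ^ x j) else 0 with hT
  have hsplit : ∀ x, (if activeServers Ka x ⊆ A then
      (∑ k ∈ activeServers Ka x, μ k) * (F (∑ i, x i) * stateWeight μ Ka lam x) else 0) =
      ∑ i, T i x := by
    intro x
    by_cases hA : activeServers Ka x ⊆ A
    · have hbal := Phi_balance hμ hKa x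
      simp only [hT, hA, and_true, if_true, ← sum_filter, stateWeight]
      rw [← mul_sum, ← sum_mul, ← hbal]
      ring
    · simp [hT, hA]
  have hshift : ∀ i y, T i (addJob y i) = (if Ka i ⊆ A then lam i else 0) *
      (if activeServers Ka y ⊆ A then F (∑ j, y j + 1) * stateWeight μ Ka lam y else 0) := by
    intro i y
    have hpos : 0 < addJob y i i := by simp [addJob]
    simp only [hT, hpos, true_and, activeServers_addJob, union_subset_iff, update_addJob,
      prod_pow_addJob, sum_addJob, stateWeight]
    by_cases hi : Ka i ⊆ A <;> by_cases hy : activeServers Ka y ⊆ A <;> simp [hi, hy, mul_left_comm]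
  have hvanish : ∀ i x, x i = 0 → T i x = 0 := fun i x hx => by simp [hT, hx]
  have hsum : ∀ i, Summable (T i) := fun i =>
    (summable_comp_addJob_iff i (hvanish i)).1 <| by
      simpa only [hshift] using (hF.ite_zero _).mul_left _
  rw [tsum_congr hsplit, Summable.tsum_finsetSum fun i _ => hsum i, sum_mul]
  refine sum_congr rfl fun i _ => ?_
  rw [← tsum_comp_addJob i (hvanish i)]
  simp only [hshift, tsum_mul_left]
  rfl

theorem restrictedSum_balance (hμ : ∀ k, 0 < μ k) (hKa : ∀ i, (Ka i).Nonempty)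
    (F : ℕ → ℝ) (A : Finset Kt)
    (hF : Summable fun x => F (∑ i, x i) * stateWeight μ Ka lam x)
    (hF' : Summable fun x => F (∑ i, x i + 1) * stateWeight μ Ka lam x) :
    ∑ k ∈ A, μ k * (restrictedSum μ Ka lam F A - restrictedSum μ Ka lam F (A.erase k)) =
      (∑ i, if Ka i ⊆ A then lam i else 0) * restrictedSum μ Ka lam (fun n => F (n + 1)) A := by
  rw [← tsum_ite_subset_load_mul hμ hKa F A hF', tsum_ite_subset_sum_mul hF]
  rfl

theorem restrictedSum_empty (hKa : ∀ i, (Ka i).Nonempty) (F : ℕ → ℝ) :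
    restrictedSum μ Ka lam F ∅ = F 0 := by
  rw [restrictedSum, tsum_eq_single 0 fun x hx => if_neg fun h =>
    (activeServers_nonempty hKa hx).ne_empty (subset_empty.1 h)]
  simp [activeServers, stateWeight, Phi_zero]

theorem restrictedSum_univ [Fintype Kt] (F : ℕ → ℝ) :
    restrictedSum μ Ka lam F univ = ∑' x, F (∑ i, x i) * stateWeight μ Ka lam x :=
  tsum_congr fun _ => if_pos (subset_univ _)

theorem restrictedSum_add (F G : ℕ → ℝ) (A : Finset Kt)
    (hF : Summable fun x => F (∑ i, x i) * stateWeight μ Ka lam x)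
    (hG : Summable fun x => G (∑ i, x i) * stateWeight μ Ka lam x) :
    restrictedSum μ Ka lam (fun n => F n + G n) A =
      restrictedSum μ Ka lam F A + restrictedSum μ Ka lam G A := by
  rw [restrictedSum, restrictedSum, restrictedSum, ← (hF.ite_zero _).tsum_add (hG.ite_zero _)]
  exact tsum_congr fun x => by split_ifs <;> ring

theorem stateWeight_comp_symm (e : I ≃ I) (σ : Equiv.Perm Kt)
    (hKa : ∀ i, Ka (e i) = (Ka i).map σ.toEmbedding) (hμ : ∀ k, μ (σ k) = μ k)
    (hlam : ∀ i, lam (e i) = lam i) (x : I → ℕ) :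
    stateWeight μ Ka lam (x ∘ e.symm) = stateWeight μ Ka lam x := by
  rw [stateWeight, stateWeight, Phi_comp_symm e σ hKa hμ, ← e.prod_comp]
  simp [hlam]

theorem restrictedSum_map (e : I ≃ I) (σ : Equiv.Perm Kt)
    (hKa : ∀ i, Ka (e i) = (Ka i).map σ.toEmbedding) (hμ : ∀ k, μ (σ k) = μ k)
    (hlam : ∀ i, lam (e i) = lam i) (F : ℕ → ℝ) (A : Finset Kt) :
    restrictedSum μ Ka lam F (A.map σ.toEmbedding) = restrictedSum μ Ka lam F A := by
  rw [restrictedSum, ← (e.arrowCongr (Equiv.refl ℕ)).tsum_eq]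
  refine tsum_congr fun x => ?_
  have hx : e.arrowCongr (Equiv.refl ℕ) x = x ∘ e.symm := rfl
  simp only [hx, activeServers_comp_symm e σ hKa, map_subset_map,
    stateWeight_comp_symm e σ hKa hμ hlam, comp_apply, e.symm.sum_comp x]

theorem Gf_eq_restrictedSum_univ [Fintype Kt] :
    Gf μ Ka lam = restrictedSum μ Ka lam (fun _ => 1) univ := by
  rw [restrictedSum_univ]
  exact tsum_congr fun x => (one_mul _).symm

end RestrictedSums

section Recursions

variable {g h ρ : ℕ → ℝ} {K : ℕ}

theorem mul_prod_one_sub_eq_one (hg0 : g 0 = 1)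
    (hg : ∀ n < K, g (n + 1) - g n = ρ (n + 1) * g (n + 1)) :
    ∀ n ≤ K, g n * ∏ ℓ ∈ Icc 1 n, (1 - ρ ℓ) = 1
  | 0, _ => by simp [hg0]
  | n + 1, hn => by
    rw [prod_Icc_succ_top (by omega)]
    linear_combination mul_prod_one_sub_eq_one hg0 hg n (by omega) +
      (∏ ℓ ∈ Icc 1 n, (1 - ρ ℓ)) * hg n hn

theorem eq_mul_sum_div_one_sub (hg0 : g 0 = 1) (hh0 : h 0 = 0)
    (hg : ∀ n < K, g (n + 1) - g n = ρ (n + 1) * g (n + 1))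
    (hh : ∀ n < K, h (n + 1) - h n = ρ (n + 1) * (h (n + 1) + g (n + 1))) :
    ∀ n ≤ K, h n = g n * ∑ ℓ ∈ Icc 1 n, ρ ℓ / (1 - ρ ℓ)
  | 0, _ => by simp [hh0]
  | n + 1, hn => by
    have hρ : 1 - ρ (n + 1) ≠ 0 := by
      have hprod := mul_prod_one_sub_eq_one hg0 hg (n + 1) hn
      rw [prod_Icc_succ_top (by omega)] at hprod
      exact right_ne_zero_of_mul (right_ne_zero_of_mul_eq_one hprod)
    rw [sum_Icc_succ_top (by omega)]
    field_simp
    linear_combination hh n hn + eq_mul_sum_div_one_sub hg0 hh0 hg hh n (by omega) -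
      (∑ ℓ ∈ Icc 1 n, ρ ℓ / (1 - ρ ℓ)) * hg n hn

end Recursions

theorem sum_subtype_card_ite_subset {α : Type*} [Fintype α] [DecidableEq α] (m : ℕ)
    (A : Finset α) (r : ℝ) :
    ∑ S : {S : Finset α // S.card = m}, (if S.1 ⊆ A then r else 0) = (A.card.choose m) * r := by
  rw [sum_ite, sum_const_zero, add_zero, sum_const, nsmul_eq_mul, ← card_powersetCard,
    ← card_map (Embedding.subtype _)]
  congr 3
  ext S
  simp [mem_powersetCard, and_comm]

theorem cast_choose_eq_mul_choose_pred_div (n d : ℕ) (hd : 1 ≤ d) :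
    (n.choose d : ℝ) = n * (n - 1).choose (d - 1) / d := by
  obtain ⟨e, rfl⟩ : ∃ e, d = e + 1 := ⟨d - 1, by omega⟩
  rw [eq_div_iff (by positivity)]
  rcases n with _ | m
  · simp
  · exact_mod_cast (Nat.add_one_mul_choose_eq m e).symm

section SymmetricSystems

variable {I Kt : Type} [Fintype I] [DecidableEq I] [DecidableEq Kt]
  {μ : ℝ} {Ka : I → Finset Kt} {lam : I → ℝ} {ρ : ℕ → ℝ}

def ServerSymmetric (Ka : I → Finset Kt) (lam : I → ℝ) : Prop :=
  ∀ σ : Equiv.Perm Kt, ∃ e : I ≃ I,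
    (∀ i, Ka (e i) = (Ka i).map σ.toEmbedding) ∧ ∀ i, lam (e i) = lam i

theorem ServerSymmetric.exists_restrictedSum_eq_apply_card (hsymm : ServerSymmetric Ka lam)
    (F : ℕ → ℝ) : ∃ φ : ℕ → ℝ, ∀ A, restrictedSum (fun _ => μ) Ka lam F A = φ A.card :=
  exists_forall_eq_apply_card fun σ A => by
    obtain ⟨e, hKa, hlam⟩ := hsymm σ
    exact restrictedSum_map e σ hKa (fun _ => rfl) hlam F A

variable [Fintype Kt]

theorem restrictedSum_succ_sub (hμ : 0 < μ) (hKa : ∀ i, (Ka i).Nonempty)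
    (hload : ∀ A, ∑ i, (if Ka i ⊆ A then lam i else 0) = μ * A.card * ρ A.card)
    {F φ φ' : ℕ → ℝ}
    (hF : Summable fun x => F (∑ i, x i) * stateWeight (fun _ => μ) Ka lam x)
    (hF' : Summable fun x => F (∑ i, x i + 1) * stateWeight (fun _ => μ) Ka lam x)
    (hφ : ∀ A, restrictedSum (fun _ => μ) Ka lam F A = φ A.card)
    (hφ' : ∀ A, restrictedSum (fun _ => μ) Ka lam (fun n => F (n + 1)) A = φ' A.card)
    {n : ℕ} (hn : n < Fintype.card Kt) :
    φ (n + 1) - φ n = ρ (n + 1) * φ' (n + 1) := by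
  obtain ⟨A, -, hA⟩ := exists_subset_card_eq (s := (univ : Finset Kt)) (n := n + 1)
    (by simpa using hn)
  have hbal := restrictedSum_balance (fun _ => hμ) hKa F A hF hF'
  rw [sum_congr rfl fun k hk => by rw [hφ, hφ, card_erase_of_mem hk, hA, Nat.add_sub_cancel],
    sum_const, hA, nsmul_eq_mul, hload, hφ', hA] at hbal
  have hμn : μ * (n + 1 : ℕ) ≠ 0 := mul_ne_zero hμ.ne' (Nat.cast_ne_zero.2 n.succ_ne_zero)
  exact mul_left_cancel₀ hμn (by linear_combination hbal)

theorem restrictedSum_one_univ_mul_prod_eq_one (hμ : 0 < μ) (hKa : ∀ i, (Ka i).Nonempty)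
    (hsymm : ServerSymmetric Ka lam)
    (hload : ∀ A, ∑ i, (if Ka i ⊆ A then lam i else 0) = μ * A.card * ρ A.card)
    (hG : Summable (stateWeight (fun _ => μ) Ka lam)) :
    restrictedSum (fun _ => μ) Ka lam (fun _ => 1) univ *
      ∏ ℓ ∈ Icc 1 (Fintype.card Kt), (1 - ρ ℓ) = 1 := by
  obtain ⟨g, hg⟩ := hsymm.exists_restrictedSum_eq_apply_card (μ := μ) fun _ => 1
  have hG1 : Summable fun x => (fun _ => (1 : ℝ)) (∑ i, x i) * stateWeight (fun _ => μ) Ka lam x :=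
    hG.congr fun x => (one_mul _).symm
  have hg0 : g 0 = 1 := by simpa using (hg ∅).symm.trans (restrictedSum_empty hKa _)
  rw [hg, card_univ]
  exact mul_prod_one_sub_eq_one hg0
    (fun n hn => restrictedSum_succ_sub (F := fun _ => 1) hμ hKa hload hG1 hG1 hg hg hn) _ le_rfl

theorem restrictedSum_cast_univ_eq_mul_sum (hμ : 0 < μ) (hKa : ∀ i, (Ka i).Nonempty)
    (hsymm : ServerSymmetric Ka lam)
    (hload : ∀ A, ∑ i, (if Ka i ⊆ A then lam i else 0) = μ * A.card * ρ A.card)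
    (hG : Summable (stateWeight (fun _ => μ) Ka lam))
    (hS : Summable fun x => ((∑ i, x i : ℕ) : ℝ) * stateWeight (fun _ => μ) Ka lam x) :
    restrictedSum (fun _ => μ) Ka lam (fun n => n) univ =
      restrictedSum (fun _ => μ) Ka lam (fun _ => 1) univ *
        ∑ ℓ ∈ Icc 1 (Fintype.card Kt), ρ ℓ / (1 - ρ ℓ) := by
  obtain ⟨g, hg⟩ := hsymm.exists_restrictedSum_eq_apply_card (μ := μ) fun _ => 1
  obtain ⟨h, hh⟩ := hsymm.exists_restrictedSum_eq_apply_card (μ := μ) fun n => n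
  have hG1 : Summable fun x => (fun _ => (1 : ℝ)) (∑ i, x i) * stateWeight (fun _ => μ) Ka lam x :=
    hG.congr fun x => (one_mul _).symm
  have hS1 : Summable fun x => ((∑ i, x i + 1 : ℕ) : ℝ) * stateWeight (fun _ => μ) Ka lam x :=
    (hS.add hG).congr fun x => by push_cast; ring
  have hh1 : ∀ A, restrictedSum (fun _ => μ) Ka lam (fun n => ((n + 1 : ℕ) : ℝ)) A =
      (h + g) A.card := fun A => by
    rw [Pi.add_apply, ← hh, ← hg, ← restrictedSum_add (fun n => (n : ℝ)) (fun _ => 1) A hS hG1]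
    simp only [Nat.cast_succ]
  have hg0 : g 0 = 1 := by simpa using (hg ∅).symm.trans (restrictedSum_empty hKa _)
  have hh0 : h 0 = 0 := by simpa using (hh ∅).symm.trans (restrictedSum_empty hKa _)
  rw [hg, hh, card_univ]
  exact eq_mul_sum_div_one_sub hg0 hh0
    (fun n hn => restrictedSum_succ_sub (F := fun _ => 1) hμ hKa hload hG1 hG1 hg hg hn)
    (fun n hn => by
      simpa using restrictedSum_succ_sub (F := fun n => n) hμ hKa hload hS hS1 hh hh1 hn) _ le_rfl

end SymmetricSystems

section RandomizedPool

variable {K N : ℕ} {d : Fin N → ℕ} {p : Fin N → ℝ} {lam μ : ℝ}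

def HetCls.permServers (σ : Equiv.Perm (Fin K)) : HetCls K N d ≃ HetCls K N d :=
  Equiv.sigmaCongrRight fun _ => σ.finsetCongr.subtypeEquiv fun S => by simp

theorem sum_ite_subset_hetRate (hμ : μ ≠ 0) (hd1 : ∀ u, 1 ≤ d u) (hdK : ∀ u, d u ≤ K)
    (A : Finset (Fin K)) :
    ∑ c : HetCls K N d, (if c.2.1 ⊆ A then hetRate K N d p lam c else 0) =
      μ * A.card * hetLoad K N d p lam μ A.card := by
  simp only [Fintype.sum_sigma, hetRate, sum_subtype_card_ite_subset, hetLoad, mul_sum]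
  refine sum_congr rfl fun u _ => ?_
  have hd : (d u : ℝ) ≠ 0 := Nat.cast_ne_zero.2 (by have := hd1 u; omega)
  have hK : (K : ℝ) ≠ 0 := Nat.cast_ne_zero.2 (by have := hd1 u; have := hdK u; omega)
  have hC : ((K - 1).choose (d u - 1) : ℝ) ≠ 0 :=
    Nat.cast_ne_zero.2 (Nat.choose_pos (by have := hd1 u; have := hdK u; omega)).ne'
  rw [cast_choose_eq_mul_choose_pred_div _ _ (hd1 u),
    cast_choose_eq_mul_choose_pred_div K _ (hd1 u)]
  field_simp

theorem hetCls_servers_nonempty (hd1 : ∀ u, 1 ≤ d u) (c : HetCls K N d) : c.2.1.Nonempty :=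
  card_pos.1 (by rw [c.2.2]; exact hd1 c.1)

theorem hetPool_serverSymmetric :
    ServerSymmetric (fun c : HetCls K N d => c.2.1) (hetRate K N d p lam) :=
  fun σ => ⟨HetCls.permServers σ, fun _ => rfl, fun _ => rfl⟩

end RandomizedPool

theorem heterogeneous_degrees_randomized_pool_general
    (K N : ℕ)
    (d : Fin N → ℕ) (hd1 : ∀ u, 1 ≤ d u) (hdK : ∀ u, d u ≤ K)
    (lam μ : ℝ) (hμ : 0 < μ)
    (p : Fin N → ℝ)
    (hG : Summable (fun x : HetCls K N d → ℕ =>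
      Phi (fun _ : Fin K => μ) (fun c => c.2.1) x *
        ∏ c, hetRate K N d p lam c ^ x c)) :
    (Gf (fun _ : Fin K => μ) (fun c : HetCls K N d => c.2.1)
        (hetRate K N d p lam))⁻¹ =
      (∏ ℓ ∈ Finset.Icc 1 K, (1 - hetLoad K N d p lam μ ℓ)) ∧
    (Summable (fun x : HetCls K N d → ℕ =>
        (∑ c, (x c : ℝ)) * (Phi (fun _ : Fin K => μ) (fun c => c.2.1) x *
          ∏ c, hetRate K N d p lam c ^ x c)) →
      (Gf (fun _ : Fin K => μ) (fun c : HetCls K N d => c.2.1)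
          (hetRate K N d p lam))⁻¹ *
        (∑' x : HetCls K N d → ℕ,
          (∑ c, (x c : ℝ)) * (Phi (fun _ : Fin K => μ) (fun c => c.2.1) x *
            ∏ c, hetRate K N d p lam c ^ x c)) =
        ∑ ℓ ∈ Finset.Icc 1 K,
          hetLoad K N d p lam μ ℓ / (1 - hetLoad K N d p lam μ ℓ)) := by
  have hKa := hetCls_servers_nonempty (K := K) hd1
  have hload := sum_ite_subset_hetRate (p := p) (lam := lam) hμ.ne' hd1 hdK
  have hprod := restrictedSum_one_univ_mul_prod_eq_one hμ hKa hetPool_serverSymmetric hload hG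
  rw [Fintype.card_fin, ← Gf_eq_restrictedSum_univ] at hprod
  refine ⟨inv_eq_of_mul_eq_one_right hprod, fun hS => ?_⟩
  have hL := restrictedSum_cast_univ_eq_mul_sum hμ hKa hetPool_serverSymmetric hload hG
    (hS.congr fun x => by rw [Nat.cast_sum]; rfl)
  rw [restrictedSum_univ, Fintype.card_fin, ← Gf_eq_restrictedSum_univ] at hL
  rw [← inv_mul_cancel_left₀ (left_ne_zero_of_mul_eq_one hprod) (∑ ℓ ∈ Icc 1 K, _), ← hL]
  simp only [Nat.cast_sum]
  rfl

/-- In the randomized pool with heterogeneous degrees, if `G(λ) < ∞`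
then `ψ = ∏_{ℓ=1}^K (1 − ρ_{|ℓ})`; and if moreover the mean-number-of-jobs series
converges, then `L = ∑_{ℓ=1}^K ρ_{|ℓ}/(1 − ρ_{|ℓ})`. -/
theorem heterogeneous_degrees_randomized_pool
    (K N : ℕ) (hK : 1 ≤ K) (hN : 1 ≤ N)
    (d : Fin N → ℕ) (hd1 : ∀ u, 1 ≤ d u) (hdK : ∀ u, d u ≤ K)
    (lam μ : ℝ) (hlam : 0 < lam) (hμ : 0 < μ)
    (p : Fin N → ℝ) (hp : ∀ u, 0 ≤ p u) (hp1 : ∑ u, p u = 1)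
    (hG : Summable (fun x : HetCls K N d → ℕ =>
      Phi (fun _ : Fin K => μ) (fun c => c.2.1) x *
        ∏ c, hetRate K N d p lam c ^ x c)) :
    (Gf (fun _ : Fin K => μ) (fun c : HetCls K N d => c.2.1)
        (hetRate K N d p lam))⁻¹ =
      (∏ ℓ ∈ Finset.Icc 1 K, (1 - hetLoad K N d p lam μ ℓ)) ∧
    (Summable (fun x : HetCls K N d → ℕ =>
        (∑ c, (x c : ℝ)) * (Phi (fun _ : Fin K => μ) (fun c => c.2.1) x *
          ∏ c, hetRate K N d p lam c ^ x c)) →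
      (Gf (fun _ : Fin K => μ) (fun c : HetCls K N d => c.2.1)
          (hetRate K N d p lam))⁻¹ *
        (∑' x : HetCls K N d → ℕ,
          (∑ c, (x c : ℝ)) * (Phi (fun _ : Fin K => μ) (fun c => c.2.1) x *
            ∏ c, hetRate K N d p lam c ^ x c)) =
        ∑ ℓ ∈ Finset.Icc 1 K,
          hetLoad K N d p lam μ ℓ / (1 - hetLoad K N d p lam μ ℓ)) :=
  heterogeneous_degrees_randomized_pool_general K N d hd1 hdK lam μ hμ p hG
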